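/- With L = Σ_{n∈ω} L_n, L_n ≅ ω^{δ_n}, and I = {A ⊆ L : L does not embed into A}: a subset A ⊆ L belongs to I if and only if S^m_A = ∅ for some m ∈ ω, where S^m_A = {n : order type of A∩L_n ≥ ω^{δ_m}}. Moreover, if A intersects only finitely many L_n, then A ∈ I. -/

import Mathlib

open Ordinal Set

/-- The order type of a set in a linear order: the (unique, when it exists)
ordinal `o` such that the set is order-isomorphic to `Set.Iio o`. -/
noncomputable def otypeOf {X : Type*} [LinearOrder X] (s : Set X) : Ordinal :=
  sInf {o : Ordinal | Nonempty (s ≃o Set.Iio o)}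

/-!
If every threshold `ω ^ δ m` is reached by the type of some fibre of `A`, then, since a fibre of type
`≥ ω ^ δ m` has index `≥ m` and the thresholds increase, it is reached by fibres of arbitrarily
large index; a strictly increasing choice of fibres `n₀ < n₁ < ⋯` with `ω ^ δ k` embedded in
fibre `n_k` assembles into an embedding of `L` into `A`. If instead every fibre has type
`< ω ^ δ m`, then `A` embeds into `ℕ ×ₗ ω ^ δ m`, of type `ω ^ (δ m + 1) < ω ^ δ (m + 2)`, while
`L` contains a block of type `ω ^ δ (m + 2)`. When only the fibres of index `≤ b` are nonempty,
every fibre has type `< ω ^ δ (b + 1)`.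
-/

universe u

namespace Ordinal

theorem nonempty_Iio_orderEmbedding_iff {a b : Ordinal.{u}} :
    Nonempty (Iio a ↪o Iio b) ↔ a ≤ b := by
  refine ⟨fun ⟨e⟩ => ?_,
    fun h => ⟨.ofStrictMono (inclusion (Iio_subset_Iio h)) fun _ _ => id⟩⟩
  rw [← lift_le.{u + 1}, ← type_lt_Iio, ← type_lt_Iio]
  exact e.ltEmbedding.ordinal_type_le

theorem eq_of_Iio_orderIso {a b : Ordinal.{u}} (e : Iio a ≃o Iio b) : a = b :=
  (nonempty_Iio_orderEmbedding_iff.mp ⟨e⟩).antisymm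
    (nonempty_Iio_orderEmbedding_iff.mp ⟨e.symm⟩)

theorem le_mul_omega0_of_orderEmbedding {a b : Ordinal.{u}} (e : Iio b ↪o ℕ ×ₗ Iio a) :
    b ≤ a * ω := by
  have step (n : ℕ) (x : Iio a) : a * n + x < a * ↑(n + 1) := by
    rw [Nat.cast_succ, mul_add_one]
    exact add_lt_add_right (show (x : Ordinal) < a from x.2) _
  refine nonempty_Iio_orderEmbedding_iff.mp ⟨e.trans (OrderEmbedding.ofStrictMono
    (fun p => ⟨a * (ofLex p).1 + (ofLex p).2, ?_⟩) ?_)⟩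
  · exact (step _ _).trans_le (mul_le_mul_right (natCast_lt_omega0 _).le a)
  · rintro ⟨n, x⟩ ⟨m, y⟩ (⟨_, _, hnm⟩ | ⟨_, hxy⟩)
    · exact (step n x).trans_le
        ((mul_le_mul_right (Nat.cast_le.mpr hnm) a).trans le_self_add)
    · exact add_lt_add_right (show (x : Ordinal) < y from hxy) _

end Ordinal

theorem otypeOf_eq_of_orderIso {X : Type*} [LinearOrder X] {s : Set X} {o : Ordinal}
    (e : s ≃o Iio o) : otypeOf s = o := by
  have : {o' : Ordinal | Nonempty (s ≃o Iio o')} = {o} :=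
    eq_singleton_iff_unique_mem.mpr
      ⟨⟨e⟩, fun o' ⟨e'⟩ => eq_of_Iio_orderIso (e'.symm.trans e)⟩
  rw [otypeOf, this, csInf_singleton]

section OtypeOf

variable {l : Ordinal.{u}}

theorem exists_orderIso_Iio (s : Set (Iio l)) : ∃ o : Ordinal.{u}, Nonempty (s ≃o Iio o) := by
  have hle : typeLT s ≤ lift.{u + 1} l :=
    type_lt_Iio l ▸ (OrderEmbedding.subtype s).ltEmbedding.ordinal_type_le
  obtain ⟨o, ho⟩ := mem_range_lift_of_le hle
  obtain ⟨e⟩ := type_eq.mp (ho.symm.trans (type_lt_Iio o).symm)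
  exact ⟨o, ⟨OrderIso.ofRelIsoLT e⟩⟩

theorem nonempty_orderIso_Iio_otypeOf (s : Set (Iio l)) :
    Nonempty (s ≃o Iio (otypeOf s : Ordinal.{u})) := by
  obtain ⟨o, ⟨e⟩⟩ := exists_orderIso_Iio s
  rw [otypeOf_eq_of_orderIso e]
  exact ⟨e⟩

theorem le_otypeOf_iff {s : Set (Iio l)} {o : Ordinal.{u}} :
    o ≤ otypeOf s ↔ Nonempty (Iio o ↪o s) := by
  obtain ⟨e⟩ := nonempty_orderIso_Iio_otypeOf s
  rw [← nonempty_Iio_orderEmbedding_iff]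
  exact ⟨fun ⟨f⟩ => ⟨f.trans e.symm.toOrderEmbedding⟩,
    fun ⟨f⟩ => ⟨f.trans e.toOrderEmbedding⟩⟩

theorem otypeOf_le_iff {s : Set (Iio l)} {o : Ordinal.{u}} :
    otypeOf s ≤ o ↔ Nonempty (s ↪o Iio o) := by
  obtain ⟨e⟩ := nonempty_orderIso_Iio_otypeOf s
  rw [← nonempty_Iio_orderEmbedding_iff]
  exact ⟨fun ⟨f⟩ => ⟨e.toOrderEmbedding.trans f⟩,
    fun ⟨f⟩ => ⟨e.symm.toOrderEmbedding.trans f⟩⟩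

theorem otypeOf_le (s : Set (Iio l)) : otypeOf s ≤ l :=
  otypeOf_le_iff.mpr ⟨OrderEmbedding.subtype s⟩

end OtypeOf

section LexFiber

variable {ι κ β : Type*} {α : κ → Type*} {γ : ι → Type*}
  [LinearOrder ι] [LinearOrder κ] [LinearOrder β]
  [∀ j, LinearOrder (α j)] [∀ i, LinearOrder (γ i)]

def lexFiber (A : Set (Σₗ j, α j)) (j : κ) : Set (α j) := {y | toLex ⟨j, y⟩ ∈ A}

def OrderEmbedding.sigmaLexMk (j : κ) : α j ↪o Σₗ j, α j :=
  .ofStrictMono (fun y => toLex ⟨j, y⟩) fun _ _ h => Sigma.Lex.right _ _ h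

def OrderEmbedding.prodLexOfLexFiber {A : Set (Σₗ j, α j)} (f : ∀ j, lexFiber A j ↪o β) :
    A ↪o κ ×ₗ β :=
  .ofStrictMono (fun a => toLex ((ofLex a.1).1, f _ ⟨(ofLex a.1).2, a.2⟩)) <| by
    rintro ⟨⟨i, x⟩, hx⟩ ⟨⟨j, y⟩, hy⟩ (⟨_, _, hij⟩ | ⟨_, _, hxy⟩)
    · exact Prod.Lex.left _ _ hij
    · exact Prod.Lex.right _ ((f i).lt_iff_lt.mpr hxy)

def OrderEmbedding.sigmaLexOfLexFiber {A : Set (Σₗ j, α j)} {g : ι → κ} (hg : StrictMono g)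
    (f : ∀ i, γ i ↪o lexFiber A (g i)) : (Σₗ i, γ i) ↪o A :=
  .ofStrictMono
    (fun z => ⟨toLex ⟨g (ofLex z).1, f _ (ofLex z).2⟩, (f _ (ofLex z).2).2⟩) <| by
    rintro ⟨i, x⟩ ⟨j, y⟩ (⟨_, _, hij⟩ | ⟨_, _, hxy⟩)
    · exact Sigma.Lex.left _ _ (hg hij)
    · exact Sigma.Lex.right _ _ ((f i).lt_iff_lt.mpr hxy)

end LexFiber

section Blocks

variable {δ : ℕ → Ordinal.{u}}

theorem le_of_opow_le_otypeOf_lexFiber (hδ : StrictMono δ)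
    {A : Set (Σₗ n : ℕ, Iio (ω ^ δ n))} {m n : ℕ} (h : ω ^ δ m ≤ otypeOf (lexFiber A n)) : m ≤ n :=
  hδ.le_iff_le.mp <| (opow_le_opow_iff_right one_lt_omega0).mp (h.trans (otypeOf_le _))

theorem nonempty_orderEmbedding_of_forall_exists_le_otypeOf (hδ : StrictMono δ)
    (A : Set (Σₗ n : ℕ, Iio (ω ^ δ n)))
    (h : ∀ m, ∃ n, ω ^ δ m ≤ otypeOf (lexFiber A n)) :
    Nonempty ((Σₗ n : ℕ, Iio (ω ^ δ n)) ↪o A) := by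
  have hfreq (m : ℕ) : ∃ᶠ n in Filter.atTop, ω ^ δ m ≤ otypeOf (lexFiber A n) := by
    refine Filter.frequently_atTop.mpr fun k => ?_
    obtain ⟨n, hn⟩ := h (max m k)
    exact ⟨n, (le_max_right m k).trans (le_of_opow_le_otypeOf_lexFiber hδ hn),
      (opow_le_opow_right omega0_pos (hδ.monotone (le_max_left m k))).trans hn⟩
  obtain ⟨φ, hφ, hle⟩ := Filter.extraction_forall_of_frequently hfreq
  exact ⟨.sigmaLexOfLexFiber hφ fun m => (le_otypeOf_iff.mp (hle m)).some⟩

theorem not_nonempty_orderEmbedding_of_otypeOf_lt (hδ : StrictMono δ)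
    (A : Set (Σₗ n : ℕ, Iio (ω ^ δ n))) (m : ℕ)
    (h : ∀ n, otypeOf (lexFiber A n) < ω ^ δ m) :
    ¬ Nonempty ((Σₗ n : ℕ, Iio (ω ^ δ n)) ↪o A) := by
  rintro ⟨e⟩
  let toProd : A ↪o ℕ ×ₗ Iio (ω ^ δ m) :=
    .prodLexOfLexFiber fun n => (otypeOf_le_iff.mp (h n).le).some
  have hle := le_mul_omega0_of_orderEmbedding
    (((OrderEmbedding.sigmaLexMk (m + 2)).trans e).trans toProd)
  rw [← opow_succ, opow_le_opow_iff_right one_lt_omega0] at hle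
  exact hle.not_gt
    ((Order.succ_le_of_lt (hδ m.lt_succ_self)).trans_lt (hδ (m + 1).lt_succ_self))

theorem not_nonempty_orderEmbedding_of_finite (hδ : StrictMono δ)
    (A : Set (Σₗ n : ℕ, Iio (ω ^ δ n))) (hA : {n | (lexFiber A n).Nonempty}.Finite) :
    ¬ Nonempty ((Σₗ n : ℕ, Iio (ω ^ δ n)) ↪o A) := by
  obtain ⟨b, hb⟩ := hA.bddAbove
  refine not_nonempty_orderEmbedding_of_otypeOf_lt hδ A (b + 1)
    fun n => lt_of_not_ge fun hn => ?_
  obtain ⟨f⟩ := le_otypeOf_iff.mp hn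
  have hnb : n ≤ b := hb ⟨_, (f ⟨0, opow_pos _ omega0_pos⟩).2⟩
  have := le_of_opow_le_otypeOf_lexFiber hδ hn
  omega

end Blocks

theorem stmt17_general (δ : ℕ → Ordinal) (hδmono : StrictMono δ) :
    (∀ A : Set (Σₗ n : ℕ, (Set.Iio (omega0 ^ δ n))),
      ¬ Nonempty ((Σₗ n : ℕ, (Set.Iio (omega0 ^ δ n))) ↪o A) ↔
        ∃ m : ℕ,
          {n : ℕ | omega0 ^ δ m ≤
            otypeOf {y : Set.Iio (omega0 ^ δ n) | toLex ⟨n, y⟩ ∈ A}} = ∅) ∧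
    (∀ A : Set (Σₗ n : ℕ, (Set.Iio (omega0 ^ δ n))),
      {n : ℕ | {y : Set.Iio (omega0 ^ δ n) | toLex ⟨n, y⟩ ∈ A}.Nonempty}.Finite →
        ¬ Nonempty ((Σₗ n : ℕ, (Set.Iio (omega0 ^ δ n))) ↪o A)) := by
  refine ⟨fun A => ⟨fun hA => ?_, fun ⟨m, hm⟩ => ?_⟩,
    not_nonempty_orderEmbedding_of_finite hδmono⟩
  · by_contra! hS
    exact hA (nonempty_orderEmbedding_of_forall_exists_le_otypeOf hδmono A hS)
  · exact not_nonempty_orderEmbedding_of_otypeOf_lt hδmono A m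
      fun n => lt_of_not_ge fun hn => eq_empty_iff_forall_notMem.mp hm n hn

/-- With L = Σ_{n∈ω} L_n, L_n ≅ ω^{δ_n}, and I = {A ⊆ L : L does not embed into A}:
A ∈ I iff S^m_A = ∅ for some m, where S^m_A = {n : type(A ∩ L_n) ≥ ω^{δ_m}};
moreover, if A meets only finitely many L_n then A ∈ I. -/
theorem stmt17 (γ : Ordinal) (hc : γ.card ≤ Cardinal.aleph0) (hl : Order.IsSuccLimit γ)
    (δ : ℕ → Ordinal) (hδmono : StrictMono δ) (hδpos : ∀ n, 0 < δ n)
    (hδlt : ∀ n, δ n < γ) (hcof : ∀ β < γ, ∃ n, β < δ n) :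
    (∀ A : Set (Σₗ n : ℕ, (Set.Iio (omega0 ^ δ n))),
      ¬ Nonempty ((Σₗ n : ℕ, (Set.Iio (omega0 ^ δ n))) ↪o A) ↔
        ∃ m : ℕ,
          {n : ℕ | omega0 ^ δ m ≤
            otypeOf {y : Set.Iio (omega0 ^ δ n) | toLex ⟨n, y⟩ ∈ A}} = ∅) ∧
    (∀ A : Set (Σₗ n : ℕ, (Set.Iio (omega0 ^ δ n))),
      {n : ℕ | {y : Set.Iio (omega0 ^ δ n) | toLex ⟨n, y⟩ ∈ A}.Nonempty}.Finite →
        ¬ Nonempty ((Σₗ n : ℕ, (Set.Iio (omega0 ^ δ n))) ↪o A)) :=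
  stmt17_general δ hδmono
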